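/- arXiv:2604.26932 — 2 statements merged into one kernel-verified Lean document; each statement's English description precedes it below -/
import Mathlib

section
/- Let H be a real Hilbert space, Q a positive definite bounded self-adjoint operator, and F : H → H firmly nonexpansive in the Q-inner product, i.e. ‖F(x)−F(y)‖_Q² ≤ ⟨x−y, F(x)−F(y)⟩_Q for all x,y. Let Γ be a bounded self-adjoint operator with 0 ≺ Γ ⪯ α_max·I for some 0 < α_max < 2, commuting with Q, and set H_metric := Q·Γ^{-1} and S := I − Γ∘F. Then for all x, y: ‖S(x)−S(y)‖²_{H_metric} ≤ ‖x−y‖²_{H_metric} − (2/α_max − 1)·‖(I−S)(x)−(I−S)(y)‖²_{H_metric}. -/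
/-!
Writing `w = F x - F y`, we have `S x - S y = (x - y) - Γ w` and `(I - S) x - (I - S) y = Γ w`,
and since `Q Γ⁻¹` is symmetric with `Q Γ⁻¹ Γ = Q`, expanding the square reduces the claim to
`(2 / αmax) ⟪Γ w, Q w⟫ ≤ 2 ⟪x - y, Q w⟫`. Firm nonexpansiveness gives `⟪w, Q w⟫ ≤ ⟪x - y, Q w⟫`,
so it remains to see `⟪Γ w, Q w⟫ ≤ αmax ⟪w, Q w⟫`, i.e. that the product of the commuting
positive operators `αmax - Γ` and `Q` is positive. Without completeness there is no square root
to appeal to; instead the iteration `Bₙ₊₁ = Bₙ - Bₙ²` started at `0 ≤ A ≤ 1` stays in `[0, 1]`,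
satisfies `A = ∑_{k<n} Bₖ² + Bₙ` and `Bₙ → 0` strongly, whence
`⟪A Q w, w⟫ = ∑_k ⟪Q Bₖ w, Bₖ w⟫ ≥ 0`.
-/

open RealInnerProductSpace Filter Topology

namespace ContinuousLinearMap

variable {H : Type*} [NormedAddCommGroup H] [InnerProductSpace ℝ H]

theorem IsPositive.conj_of_isSymmetric {S T : H →L[ℝ] H} (hS : S.IsSymmetric)
    (hT : T.IsPositive) : (S * T * S).IsPositive := by
  have hS' : ∀ a b, ⟪S a, b⟫ = ⟪a, S b⟫ := hS
  refine (isPositive_iff _).2 ⟨fun x y => ?_, fun x => ?_⟩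
  · change ⟪S (T (S x)), y⟫ = ⟪x, S (T (S y))⟫
    rw [hS', hT.inner_left_eq_inner_right, hS']
  · change 0 ≤ ⟪S (T (S x)), x⟫
    rw [hS']
    exact hT.inner_nonneg_left (S x)

def subSqIter (A : H →L[ℝ] H) : ℕ → H →L[ℝ] H
  | 0 => A
  | n + 1 => subSqIter A n - subSqIter A n * subSqIter A n

variable {A Q : H →L[ℝ] H}

theorem isPositive_subSqIter (hA : A.IsPositive) (hA1 : (1 - A).IsPositive) (n : ℕ) :
    (subSqIter A n).IsPositive ∧ (1 - subSqIter A n).IsPositive := by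
  induction n with
  | zero => exact ⟨hA, hA1⟩
  | succ n ih =>
    obtain ⟨hB, hB1⟩ := ih
    set B := subSqIter A n
    have hsucc : subSqIter A (n + 1) = B - B * B := rfl
    constructor
    · have : B - B * B = B * (1 - B) * B + (1 - B) * B * (1 - B) := by noncomm_ring
      rw [hsucc, this]
      exact (hB1.conj_of_isSymmetric hB.isSymmetric).add (hB.conj_of_isSymmetric hB1.isSymmetric)
    · have : 1 - (B - B * B) = (1 - B) + B * 1 * B := by noncomm_ring
      rw [hsucc, this]
      exact hB1.add (isPositive_one.conj_of_isSymmetric hB.isSymmetric)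

theorem commute_subSqIter (h : Commute A Q) (n : ℕ) : Commute (subSqIter A n) Q := by
  induction n with
  | zero => exact h
  | succ n ih => exact ih.sub_left (ih.mul_left ih)

theorem sum_mul_self_subSqIter_add (A : H →L[ℝ] H) (n : ℕ) :
    ∑ k ∈ Finset.range n, subSqIter A k * subSqIter A k + subSqIter A n = A := by
  induction n with
  | zero => simp [subSqIter]
  | succ n ih =>
    conv_rhs => rw [← ih]
    rw [Finset.sum_range_succ, subSqIter]
    abel

theorem isSymmetric_subSqIter (hA : A.IsSymmetric) (n : ℕ) : (subSqIter A n).IsSymmetric := by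
  induction n with
  | zero => exact hA
  | succ n ih =>
    have ih' : ∀ a b, ⟪subSqIter A n a, b⟫ = ⟪a, subSqIter A n b⟫ := ih
    intro x y
    change ⟪subSqIter A n x - subSqIter A n (subSqIter A n x), y⟫ =
      ⟪x, subSqIter A n y - subSqIter A n (subSqIter A n y)⟫
    simp only [inner_sub_left, inner_sub_right, ih']

theorem inner_mul_apply_eq_sum_add (hA : A.IsSymmetric) (hAQ : Commute A Q) (w : H) (n : ℕ) :
    ⟪(A * Q) w, w⟫ =
      ∑ k ∈ Finset.range n, ⟪Q (subSqIter A k w), subSqIter A k w⟫ + ⟪Q w, subSqIter A n w⟫ := by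
  have hB (k : ℕ) (a b : H) : ⟪subSqIter A k a, b⟫ = ⟪a, subSqIter A k b⟫ :=
    isSymmetric_subSqIter hA k a b
  have hterm (k : ℕ) :
      ⟪subSqIter A k (subSqIter A k (Q w)), w⟫ = ⟪Q (subSqIter A k w), subSqIter A k w⟫ := by
    have hBQ := DFunLike.congr_fun (commute_subSqIter hAQ k).eq w
    rw [mul_apply_eq_comp, mul_apply_eq_comp] at hBQ
    rw [hB, hBQ]
  conv_lhs => rw [← sum_mul_self_subSqIter_add A n]
  simp only [mul_apply_eq_comp, add_apply, sum_apply, sum_inner, inner_add_left, hterm, hB n]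

theorem tendsto_subSqIter_apply (hA : A.IsPositive) (hA1 : (1 - A).IsPositive) (w : H) :
    Tendsto (fun n => subSqIter A n w) atTop (𝓝 0) := by
  have hsum (n : ℕ) : ∑ k ∈ Finset.range n, ‖subSqIter A k w‖ ^ 2 ≤ ⟪(A * 1) w, w⟫ := by
    rw [inner_mul_apply_eq_sum_add hA.isSymmetric (Commute.one_right A) w n]
    simp only [one_apply_eq_self, real_inner_self_eq_norm_sq, le_add_iff_nonneg_right]
    linarith [(isPositive_subSqIter hA hA1 n).1.inner_nonneg_right w]
  have hsq := (summable_of_sum_range_le (fun k => sq_nonneg _) hsum).tendsto_atTop_zero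
  rw [tendsto_zero_iff_norm_tendsto_zero]
  simpa using hsq.sqrt

theorem IsPositive.mul_of_commute_of_le_one (hA : A.IsPositive) (hA1 : (1 - A).IsPositive)
    (hQ : Q.IsPositive) (hAQ : Commute A Q) : (A * Q).IsPositive := by
  refine (isPositive_iff _).2 ⟨?_, fun w => ?_⟩
  · rw [toLinearMap_mul]
    exact hA.isSymmetric.mul_of_commute hQ.isSymmetric (hAQ.map toLinearMapRingHom)
  have hlow (n : ℕ) : ⟪Q w, subSqIter A n w⟫ ≤ ⟪(A * Q) w, w⟫ := by
    rw [inner_mul_apply_eq_sum_add hA.isSymmetric hAQ w n, le_add_iff_nonneg_left]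
    exact Finset.sum_nonneg fun k _ => hQ.inner_nonneg_left _
  have hlim : Tendsto (fun n => ⟪Q w, subSqIter A n w⟫) atTop (𝓝 0) := by
    simpa using tendsto_const_nhds.inner (tendsto_subSqIter_apply hA hA1 w)
  exact le_of_tendsto' hlim hlow

theorem isPositive_smul_one_sub {Γ : H →L[ℝ] H} {c : ℝ} (hΓ : Γ.IsSymmetric)
    (hle : ∀ x, ⟪Γ x, x⟫ ≤ c * ‖x‖ ^ 2) : (c • 1 - Γ).IsPositive := by
  have hΓ' : ∀ a b, ⟪Γ a, b⟫ = ⟪a, Γ b⟫ := hΓ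
  refine (isPositive_iff _).2 ⟨fun x y => ?_, fun x => ?_⟩
  · change ⟪c • x - Γ x, y⟫ = ⟪x, c • y - Γ y⟫
    rw [inner_sub_left, inner_sub_right, real_inner_smul_left, real_inner_smul_right, hΓ']
  · change 0 ≤ ⟪c • x - Γ x, x⟫
    rw [inner_sub_left, real_inner_smul_left, real_inner_self_eq_norm_sq]
    linarith [hle x]

theorem IsPositive.mul_of_commute (hA : A.IsPositive) (hQ : Q.IsPositive) (hAQ : Commute A Q) :
    (A * Q).IsPositive := by
  set c := ‖A‖ + 1
  have hc : 0 < c := by positivity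
  have hA1 : (1 - c⁻¹ • A).IsPositive := by
    have hle : ∀ x, ⟪A x, x⟫ ≤ c * ‖x‖ ^ 2 := fun x => by
      nlinarith [real_inner_le_norm (A x) x, A.le_opNorm x, norm_nonneg x]
    have : 1 - c⁻¹ • A = c⁻¹ • (c • 1 - A) := by
      rw [smul_sub, smul_smul, inv_mul_cancel₀ hc.ne', one_smul]
    rw [this]
    exact (isPositive_smul_one_sub hA.isSymmetric hle).smul_of_nonneg (inv_nonneg.2 hc.le)
  have hcAQ := (hA.smul_of_nonneg (inv_nonneg.2 hc.le)).mul_of_commute_of_le_one hA1 hQ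
    (hAQ.smul_left c⁻¹)
  have : A * Q = c • (c⁻¹ • A * Q) := by
    rw [smul_mul_assoc, smul_smul, mul_inv_cancel₀ hc.ne', one_smul]
  rw [this]
  exact hcAQ.smul_of_nonneg hc.le

theorem inner_apply_le_smul_of_commute {Γ : H →L[ℝ] H} {c : ℝ} (hQ : Q.IsPositive)
    (hΓ : (c • 1 - Γ).IsPositive) (hΓQ : Commute Γ Q) (w : H) :
    ⟪Γ w, Q w⟫ ≤ c * ⟪w, Q w⟫ := by
  have h := (hΓ.mul_of_commute hQ (((Commute.one_left Q).smul_left c).sub_left hΓQ)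
    ).inner_nonneg_left w
  have hΓQw : Γ (Q w) = Q (Γ w) := DFunLike.congr_fun hΓQ.eq w
  change 0 ≤ ⟪c • Q w - Γ (Q w), w⟫ at h
  rw [inner_sub_left, real_inner_smul_left, hΓQw, hQ.inner_left_eq_inner_right (Γ w),
    hQ.inner_left_eq_inner_right w] at h
  linarith

theorem inner_sub_apply_comp_inverse {Γ Γinv : H →L[ℝ] H} (hQ : Q.IsSymmetric)
    (hΓ : Γ.IsSymmetric) (hQΓ : Q ∘L Γ = Γ ∘L Q) (h1 : Γ ∘L Γinv = .id ℝ H)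
    (h2 : Γinv ∘L Γ = .id ℝ H) (u w : H) :
    ⟪u - Γ w, (Q ∘L Γinv) (u - Γ w)⟫ = ⟪u, (Q ∘L Γinv) u⟫ - 2 * ⟪u, Q w⟫ + ⟪Γ w, Q w⟫ := by
  have hQ' : ∀ a b, ⟪Q a, b⟫ = ⟪a, Q b⟫ := hQ
  have hΓ' : ∀ a b, ⟪Γ a, b⟫ = ⟪a, Γ b⟫ := hΓ
  have hcross : ⟪Γ w, Q (Γinv u)⟫ = ⟪u, Q w⟫ := by
    rw [← hQ', ← comp_apply Q Γ, hQΓ, comp_apply, hΓ', ← comp_apply Γ Γinv, h1, id_apply,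
      real_inner_comm]
  have hΓinvΓ : Γinv (Γ w) = w := DFunLike.congr_fun h2 w
  simp only [comp_apply, map_sub, hΓinvΓ, inner_sub_left, inner_sub_right, hcross]
  ring

end ContinuousLinearMap

theorem stmt_0_general {H : Type*} [NormedAddCommGroup H] [InnerProductSpace ℝ H]
    (Q Γ Γinv : H →L[ℝ] H) (F S : H → H) (αmax : ℝ)
    (hα0 : 0 < αmax)
    (hQsa : ∀ x y : H, ⟪Q x, y⟫ = ⟪x, Q y⟫) (hQpos : ∀ x : H, x ≠ 0 → 0 < ⟪x, Q x⟫)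
    (hΓsa : ∀ x y : H, ⟪Γ x, y⟫ = ⟪x, Γ y⟫)
    (hΓle : ∀ x : H, ⟪x, Γ x⟫ ≤ αmax * ‖x‖ ^ 2)
    (hcomm : Q ∘L Γ = Γ ∘L Q)
    (hinv1 : Γ ∘L Γinv = ContinuousLinearMap.id ℝ H)
    (hinv2 : Γinv ∘L Γ = ContinuousLinearMap.id ℝ H)
    (hF : ∀ x y : H, ⟪F x - F y, Q (F x - F y)⟫ ≤ ⟪x - y, Q (F x - F y)⟫)
    (hS : ∀ x : H, S x = x - Γ (F x)) :
    ∀ x y : H,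
      ⟪S x - S y, (Q ∘L Γinv) (S x - S y)⟫ ≤
        ⟪x - y, (Q ∘L Γinv) (x - y)⟫ -
          (2 / αmax - 1) *
            ⟪(x - S x) - (y - S y), (Q ∘L Γinv) ((x - S x) - (y - S y))⟫ := by
  intro x y
  have hQ : Q.IsPositive := (ContinuousLinearMap.isPositive_iff Q).2 ⟨hQsa, fun z => by
    obtain rfl | hz := eq_or_ne z 0
    · simp
    · rw [real_inner_comm]; exact (hQpos z hz).le⟩
  have hΓα : (αmax • 1 - Γ).IsPositive :=
    ContinuousLinearMap.isPositive_smul_one_sub hΓsa fun z => by rw [real_inner_comm]; exact hΓle z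
  set w := F x - F y
  have hΓw : ⟪Γ w, Q w⟫ ≤ αmax * ⟪w, Q w⟫ :=
    ContinuousLinearMap.inner_apply_le_smul_of_commute hQ hΓα hcomm.symm w
  have hS_sub : S x - S y = (x - y) - Γ w := by rw [hS, hS, map_sub]; abel
  have hI_sub : (x - S x) - (y - S y) = Γ w := by rw [hS, hS, map_sub]; abel
  have hΓΓinv : (Q ∘L Γinv) (Γ w) = Q w := by
    rw [ContinuousLinearMap.comp_apply, ← ContinuousLinearMap.comp_apply Γinv, hinv2,
      ContinuousLinearMap.id_apply]
  rw [hS_sub, hI_sub,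
    ContinuousLinearMap.inner_sub_apply_comp_inverse hQsa hΓsa hcomm hinv1 hinv2, hΓΓinv]
  have h2α : 2 / αmax * ⟪Γ w, Q w⟫ ≤ 2 * ⟪w, Q w⟫ := by
    rw [div_mul_eq_mul_div, div_le_iff₀ hα0]
    linarith
  linarith [hF x y]

theorem stmt_0 {H : Type*} [NormedAddCommGroup H] [InnerProductSpace ℝ H]
    (Q Γ Γinv : H →L[ℝ] H) (F S : H → H) (αmax : ℝ)
    (hα0 : 0 < αmax) (hα2 : αmax < 2)
    (hQsa : ∀ x y : H, ⟪Q x, y⟫ = ⟪x, Q y⟫) (hQpos : ∀ x : H, x ≠ 0 → 0 < ⟪x, Q x⟫)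
    (hΓsa : ∀ x y : H, ⟪Γ x, y⟫ = ⟪x, Γ y⟫) (hΓpos : ∀ x : H, x ≠ 0 → 0 < ⟪x, Γ x⟫)
    (hΓle : ∀ x : H, ⟪x, Γ x⟫ ≤ αmax * ‖x‖ ^ 2)
    (hcomm : Q ∘L Γ = Γ ∘L Q)
    (hinv1 : Γ ∘L Γinv = ContinuousLinearMap.id ℝ H)
    (hinv2 : Γinv ∘L Γ = ContinuousLinearMap.id ℝ H)
    (hF : ∀ x y : H, ⟪F x - F y, Q (F x - F y)⟫ ≤ ⟪x - y, Q (F x - F y)⟫)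
    (hS : ∀ x : H, S x = x - Γ (F x)) :
    ∀ x y : H,
      ⟪S x - S y, (Q ∘L Γinv) (S x - S y)⟫ ≤
        ⟪x - y, (Q ∘L Γinv) (x - y)⟫ -
          (2 / αmax - 1) *
            ⟪(x - S x) - (y - S y), (Q ∘L Γinv) ((x - S x) - (y - S y))⟫ :=
  stmt_0_general Q Γ Γinv F S αmax hα0 hQsa hQpos hΓsa hΓle hcomm hinv1 hinv2 hF hS
end

section
/- Let f : ℝ^n → ℝ and g : ℝ^m → ℝ be convex, A : ℝ^n → ℝ^p, B : ℝ^m → ℝ^p linear, c ∈ ℝ^p. Suppose 0 ∈ ∂f(x̂) + Aᵀ(λ̂ + μ̂) and 0 ∈ ∂g(ẑ) + Bᵀλ̂ for some x̂, ẑ, λ̂, μ̂, and let (x*, z*) satisfy A x* + B z* = c. Then f(x̂) + g(ẑ) − f(x*) − g(z*) ≤ −⟨λ̂, A x̂ + B ẑ − c⟩ − ⟨μ̂, A x̂ − A x*⟩. -/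
open scoped Matrix

/-- `v` is a subgradient of `f` at `x` (convex subdifferential). -/
def IsSubgradientAt {n : ℕ} (f : (Fin n → ℝ) → ℝ) (v x : Fin n → ℝ) : Prop :=
  ∀ w, f x + (v ⬝ᵥ (w - x)) ≤ f w

theorem IsSubgradientAt.sub_le_dotProduct_mulVec {n p : ℕ} {f : (Fin n → ℝ) → ℝ}
    {A : Matrix (Fin p) (Fin n) ℝ} {x : Fin n → ℝ} {u : Fin p → ℝ}
    (h : IsSubgradientAt f (-(Aᵀ *ᵥ u)) x) (w : Fin n → ℝ) :
    f x - f w ≤ u ⬝ᵥ (A *ᵥ (w - x)) := by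
  have hw := h w
  rw [neg_dotProduct, Matrix.mulVec_transpose, ← Matrix.dotProduct_mulVec] at hw
  linarith

theorem stmt_16_general {n m p : ℕ} (f : (Fin n → ℝ) → ℝ) (g : (Fin m → ℝ) → ℝ)
    (A : Matrix (Fin p) (Fin n) ℝ) (B : Matrix (Fin p) (Fin m) ℝ)
    (c : Fin p → ℝ)
    (xhat : Fin n → ℝ) (zhat : Fin m → ℝ) (lhat mhat : Fin p → ℝ)
    (xstar : Fin n → ℝ) (zstar : Fin m → ℝ)
    (hx : IsSubgradientAt f (-(Aᵀ *ᵥ (lhat + mhat))) xhat)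
    (hz : IsSubgradientAt g (-(Bᵀ *ᵥ lhat)) zhat)
    (hfeas : A *ᵥ xstar + B *ᵥ zstar = c) :
    f xhat + g zhat - f xstar - g zstar ≤
      -(lhat ⬝ᵥ (A *ᵥ xhat + B *ᵥ zhat - c)) -
        (mhat ⬝ᵥ (A *ᵥ xhat - A *ᵥ xstar)) := by
  have hf := hx.sub_le_dotProduct_mulVec xstar
  have hg := hz.sub_le_dotProduct_mulVec zstar
  subst hfeas
  simp only [Matrix.mulVec_sub, dotProduct_sub, dotProduct_add, add_dotProduct] at hf hg ⊢
  linarith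

theorem stmt_16 {n m p : ℕ} (f : (Fin n → ℝ) → ℝ) (g : (Fin m → ℝ) → ℝ)
    (hf : ConvexOn ℝ Set.univ f) (hg : ConvexOn ℝ Set.univ g)
    (A : Matrix (Fin p) (Fin n) ℝ) (B : Matrix (Fin p) (Fin m) ℝ)
    (c : Fin p → ℝ)
    (xhat : Fin n → ℝ) (zhat : Fin m → ℝ) (lhat mhat : Fin p → ℝ)
    (xstar : Fin n → ℝ) (zstar : Fin m → ℝ)
    (hx : IsSubgradientAt f (-(Aᵀ *ᵥ (lhat + mhat))) xhat)
    (hz : IsSubgradientAt g (-(Bᵀ *ᵥ lhat)) zhat)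
    (hfeas : A *ᵥ xstar + B *ᵥ zstar = c) :
    f xhat + g zhat - f xstar - g zstar ≤
      -(lhat ⬝ᵥ (A *ᵥ xhat + B *ᵥ zhat - c)) -
        (mhat ⬝ᵥ (A *ᵥ xhat - A *ᵥ xstar)) :=
  stmt_16_general f g A B c xhat zhat lhat mhat xstar zstar hx hz hfeas
end
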